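/- arXiv:2303.18180 — 4 statements merged into one kernel-verified Lean document; each statement's English description precedes it below -/
import Mathlib

section
/- Suppose the Peer order conditions hold: A V_r = B V_r P_r^{−1} + K V_r Ẽ_r (forward, interior step) and A^T V_q = B^T V_q P_q − K^T V_q Ẽ_q (adjoint, interior step), where all matrices are s×s and q ≤ r ≤ s. Then the combined condition Ẽ_q^T (V_q^T K V_r) + (V_q^T K V_r) Ẽ_r = P_q^T V_q^T B V_r − V_q^T B V_r P_r^{−1} holds. -/
open Matrix BigOperators

/-- The nilpotent matrix `Ẽ_n` with entries `(Ẽ_n)_{i,i+1} = i` (1-based). -/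
def Etilde (n : ℕ) : Matrix (Fin n) (Fin n) ℝ :=
  Matrix.of fun i j => if (j : ℕ) = (i : ℕ) + 1 then ((i : ℕ) + 1 : ℝ) else 0

/-- Pascal matrix `P_n` with entries `binom(j−1, i−1)` (1-based). -/
def Pascal (n : ℕ) : Matrix (Fin n) (Fin n) ℝ :=
  Matrix.of fun i j => (Nat.choose (j : ℕ) (i : ℕ) : ℝ)

/-- Vandermonde matrix `V_k = (𝟙, c, c², …, c^{k−1}) ∈ ℝ^{s×k}` (entrywise powers). -/
def Vand {s : ℕ} (c : Fin s → ℝ) (k : ℕ) : Matrix (Fin s) (Fin k) ℝ :=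
  Matrix.of fun i j => c i ^ (j : ℕ)

/-- Compute `Yᵀ A X` once from each relation and eliminate `A`. -/
theorem Matrix.sylvester_eq_of_mul_eq_of_transpose_mul_eq {R : Type*} [CommRing R]
    {m n k : Type*} [Fintype m] [Fintype n] [Fintype k]
    {A B K : Matrix m m R} {X : Matrix m n R} {Y : Matrix m k R}
    {P' E : Matrix n n R} {P F : Matrix k k R}
    (hX : A * X = B * X * P' + K * X * E) (hY : Aᵀ * Y = Bᵀ * Y * P - Kᵀ * Y * F) :
    Fᵀ * (Yᵀ * K * X) + (Yᵀ * K * X) * E = Pᵀ * Yᵀ * B * X - Yᵀ * B * X * P' := by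
  have hXY : Yᵀ * A * X = Yᵀ * B * X * P' + Yᵀ * K * X * E := by
    simp only [Matrix.mul_assoc, hX, Matrix.mul_add]
  have hYX : Yᵀ * A * X = Pᵀ * Yᵀ * B * X - Fᵀ * (Yᵀ * K * X) := by
    simpa only [transpose_mul, transpose_sub, transpose_transpose, Matrix.sub_mul,
      Matrix.mul_assoc] using congrArg (· * X) (congrArg transpose hY)
  rw [eq_sub_iff_add_eq] at hYX
  rw [← hYX, hXY]
  abel

theorem stmt12_general (s q r : ℕ) (c : Fin s → ℝ)
    (A B K : Matrix (Fin s) (Fin s) ℝ)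
    (hfwd : A * Vand c r = B * Vand c r * (Pascal r)⁻¹ + K * Vand c r * Etilde r)
    (hadj : Aᵀ * Vand c q = Bᵀ * Vand c q * Pascal q - Kᵀ * Vand c q * Etilde q) :
    (Etilde q)ᵀ * ((Vand c q)ᵀ * K * Vand c r) +
        ((Vand c q)ᵀ * K * Vand c r) * Etilde r =
      (Pascal q)ᵀ * (Vand c q)ᵀ * B * Vand c r -
        (Vand c q)ᵀ * B * Vand c r * (Pascal r)⁻¹ :=
  sylvester_eq_of_mul_eq_of_transpose_mul_eq hfwd hadj

/-- Combined order condition (cocos) of Lemma 4.2: the interior forward and adjoint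
order conditions imply
`Ẽ_qᵀ (V_qᵀ K V_r) + (V_qᵀ K V_r) Ẽ_r = P_qᵀ V_qᵀ B V_r − V_qᵀ B V_r P_r⁻¹`. -/
theorem stmt12 (s q r : ℕ) (hqr : q ≤ r) (hrs : r ≤ s) (c : Fin s → ℝ)
    (A B K : Matrix (Fin s) (Fin s) ℝ)
    (hfwd : A * Vand c r = B * Vand c r * (Pascal r)⁻¹ + K * Vand c r * Etilde r)
    (hadj : Aᵀ * Vand c q = Bᵀ * Vand c q * Pascal q - Kᵀ * Vand c q * Etilde q) :
    (Etilde q)ᵀ * ((Vand c q)ᵀ * K * Vand c r) +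
        ((Vand c q)ᵀ * K * Vand c r) * Etilde r =
      (Pascal q)ᵀ * (Vand c q)ᵀ * B * Vand c r -
        (Vand c q)ᵀ * B * Vand c r * (Pascal r)⁻¹ :=
  stmt12_general s q r c A B K hfwd hadj
end

section
/- Suppose the end-step forward condition A_N V_r = B_N V_r P_r^{−1} + K_N V_r Ẽ_r, the adjoint end condition A_N^T V_q = w 𝟙_r^T − K_N^T V_q Ẽ_q with V_r^T w = 𝟙, and the adjoint condition for n = N−1 giving V_q^T B_N = V_q^T B. Then Ẽ_q^T (V_q^T K_N V_r) + (V_q^T K_N V_r) Ẽ_r = 𝟙_q 𝟙_r^T − V_q^T B V_r P_r^{−1}. -/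
/-!
Evaluate `V_qᵀ A_N V_r` in two ways: from the forward condition (with `V_qᵀ B_N = V_qᵀ B`) it is
`V_qᵀ B V_r P_r⁻¹ + (V_qᵀ K_N V_r) Ẽ_r`, and from the transposed adjoint condition it is
`𝟙_q 𝟙_rᵀ − Ẽ_qᵀ (V_qᵀ K_N V_r)`, the rank-one term collapsing because `V_rᵀ w = 𝟙`.
Equating the two gives the claim.
-/

open Matrix BigOperators

section

variable {m k n R : Type*} [Fintype m] [CommRing R]

theorem transpose_vecMulVec_one_mul {w : m → R} {V : Matrix m n R} (hw : Vᵀ *ᵥ w = 1) :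
    (vecMulVec w (1 : k → R))ᵀ * V = of fun _ _ => 1 := by
  rw [transpose_vecMulVec, vecMulVec_mul, ← mulVec_transpose, hw]
  ext
  simp [vecMulVec_apply]

theorem end_step_order_condition [Fintype k] [Fintype n] {A K Bn B : Matrix m m R}
    {U : Matrix m k R} {V : Matrix m n R} {Pinv : Matrix n n R} {Ek : Matrix k k R}
    {En : Matrix n n R} {w : m → R}
    (hfwd : A * V = Bn * V * Pinv + K * V * En)
    (hadj : Aᵀ * U = vecMulVec w 1 - Kᵀ * U * Ek)
    (hw : Vᵀ *ᵥ w = 1) (hB : Uᵀ * Bn = Uᵀ * B) :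
    Ekᵀ * (Uᵀ * K * V) + Uᵀ * K * V * En = (of fun _ _ => 1) - Uᵀ * B * V * Pinv := by
  have forward : Uᵀ * A * V = Uᵀ * B * V * Pinv + Uᵀ * K * V * En := by
    rw [Matrix.mul_assoc, hfwd, Matrix.mul_add, ← Matrix.mul_assoc, ← Matrix.mul_assoc, hB]
    simp only [Matrix.mul_assoc]
  have adjoint : Uᵀ * A * V = (of fun _ _ => 1) - Ekᵀ * (Uᵀ * K * V) := by
    rw [← transpose_transpose (Uᵀ * A), transpose_mul, transpose_transpose, hadj, transpose_sub,
      Matrix.sub_mul, transpose_vecMulVec_one_mul hw]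
    simp only [transpose_mul, transpose_transpose, Matrix.mul_assoc]
  have key := forward.symm.trans adjoint
  rw [eq_sub_iff_add_eq] at key ⊢
  rw [← key]
  abel

end

/-- Combined order condition (cocoN) of Lemma 4.2 for the end step:
`Ẽ_qᵀ (V_qᵀ K_N V_r) + (V_qᵀ K_N V_r) Ẽ_r = 𝟙_q 𝟙_rᵀ − V_qᵀ B V_r P_r⁻¹`. -/
theorem stmt14 (s q r : ℕ) (c : Fin s → ℝ)
    (AN KN BN B : Matrix (Fin s) (Fin s) ℝ) (w : Fin s → ℝ)
    (hfwd : AN * Vand c r = BN * Vand c r * (Pascal r)⁻¹ + KN * Vand c r * Etilde r)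
    (hadj : ANᵀ * Vand c q =
      Matrix.vecMulVec w (fun _ : Fin q => (1 : ℝ)) - KNᵀ * Vand c q * Etilde q)
    (hw : (Vand c r)ᵀ.mulVec w = fun _ : Fin r => (1 : ℝ))
    (hB : (Vand c q)ᵀ * BN = (Vand c q)ᵀ * B) :
    (Etilde q)ᵀ * ((Vand c q)ᵀ * KN * Vand c r) +
        ((Vand c q)ᵀ * KN * Vand c r) * Etilde r =
      Matrix.of (fun (_ : Fin q) (_ : Fin r) => (1 : ℝ)) -
        (Vand c q)ᵀ * B * Vand c r * (Pascal r)⁻¹ :=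
  end_step_order_condition hfwd hadj hw hB
end

section
/- Under the hypotheses of the combined condition Ẽ_q^T X + X Ẽ_r = 𝟙_q 𝟙_r^T − Q with X = V_q^T K_N V_r, solvability forces e_1^T Q e_1 = 1, i.e., 𝟙^T B 𝟙 = 1 where Q = V_q^T B V_r P_r^{−1}. -/
open Matrix BigOperators

/-!
The first column of `Ẽ_n` vanishes, so the `(1,1)` entry of `Ẽ_qᵀ X + X Ẽ_r` is `0` whatever `X`
is, which forces `Q₁₁ = 1`. Since `P_r e₁ = e₁`, also `P_r⁻¹ e₁ = e₁`, and the first columns of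
the Vandermonde matrices are `𝟙`; hence `Q₁₁ = 𝟙ᵀ B 𝟙`.
-/

lemma Etilde_apply_zero_right {n : ℕ} (hn : 0 < n) (i : Fin n) : Etilde n i ⟨0, hn⟩ = 0 := by
  simp [Etilde]

lemma transpose_Etilde_mul_apply_zero_left {n : ℕ} {α : Type*} [Fintype α] (hn : 0 < n)
    (X : Matrix (Fin n) α ℝ) (j : α) : ((Etilde n)ᵀ * X) ⟨0, hn⟩ j = 0 := by
  simp [Matrix.mul_apply, Etilde_apply_zero_right hn]

lemma mul_Etilde_apply_zero_right {n : ℕ} {α : Type*} (hn : 0 < n)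
    (X : Matrix α (Fin n) ℝ) (i : α) : (X * Etilde n) i ⟨0, hn⟩ = 0 := by
  simp [Matrix.mul_apply, Etilde_apply_zero_right hn]

lemma det_Pascal (n : ℕ) : (Pascal n).det = 1 := by
  have h : (Pascal n).IsUpperTriangular := fun i j hij => by
    simp [Pascal, Nat.choose_eq_zero_of_lt (show (j : ℕ) < i from hij)]
  rw [Matrix.det_of_isUpperTriangular h]
  simp [Pascal]

lemma Pascal_apply_zero_right {n : ℕ} (hn : 0 < n) (i : Fin n) :
    Pascal n i ⟨0, hn⟩ = (1 : Matrix (Fin n) (Fin n) ℝ) i ⟨0, hn⟩ := by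
  rcases eq_or_ne i ⟨0, hn⟩ with rfl | hi
  · simp [Pascal]
  · have : (i : ℕ) ≠ 0 := fun h => hi (Fin.ext h)
    simp [Pascal, Matrix.one_apply_ne hi, Nat.choose_eq_zero_of_lt (Nat.pos_of_ne_zero this)]

lemma Pascal_inv_apply_zero_right {n : ℕ} (hn : 0 < n) (i : Fin n) :
    (Pascal n)⁻¹ i ⟨0, hn⟩ = (1 : Matrix (Fin n) (Fin n) ℝ) i ⟨0, hn⟩ := by
  have hunit : IsUnit (Pascal n).det := by simp [det_Pascal]
  calc (Pascal n)⁻¹ i ⟨0, hn⟩ = ((Pascal n)⁻¹ * (1 : Matrix (Fin n) (Fin n) ℝ)) i ⟨0, hn⟩ := by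
        rw [Matrix.mul_one]
    _ = ((Pascal n)⁻¹ * Pascal n) i ⟨0, hn⟩ := by
        simp only [Matrix.mul_apply, Pascal_apply_zero_right hn]
    _ = _ := by rw [Matrix.nonsing_inv_mul _ hunit]

lemma mul_Pascal_inv_apply_zero_right {m : Type*} {n : ℕ} (hn : 0 < n)
    (M : Matrix m (Fin n) ℝ) (i : m) : (M * (Pascal n)⁻¹) i ⟨0, hn⟩ = M i ⟨0, hn⟩ := by
  calc (M * (Pascal n)⁻¹) i ⟨0, hn⟩ = (M * (1 : Matrix (Fin n) (Fin n) ℝ)) i ⟨0, hn⟩ := by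
        simp only [Matrix.mul_apply, Pascal_inv_apply_zero_right hn]
    _ = M i ⟨0, hn⟩ := by rw [Matrix.mul_one]

lemma Vand_apply_zero_right {s k : ℕ} (c : Fin s → ℝ) (hk : 0 < k) (i : Fin s) :
    Vand c k i ⟨0, hk⟩ = 1 := by
  simp [Vand]

lemma transpose_Vand_mul_mul_Vand_apply_zero {s q r : ℕ} (c : Fin s → ℝ) (hq : 0 < q)
    (hr : 0 < r) (B : Matrix (Fin s) (Fin s) ℝ) :
    ((Vand c q)ᵀ * B * Vand c r) ⟨0, hq⟩ ⟨0, hr⟩ = ∑ i, ∑ j, B i j := by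
  simp [Matrix.mul_apply, Vand_apply_zero_right, Finset.sum_comm (γ := Fin s)]

/-- Solvability of `Ẽ_qᵀ X + X Ẽ_r = 𝟙_q 𝟙_rᵀ − Q` with `X = V_qᵀ K_N V_r` forces
`e_1ᵀ Q e_1 = 1`, i.e. `𝟙ᵀ B 𝟙 = 1`. -/
theorem stmt15 (s q r : ℕ) (hq : 0 < q) (hr : 0 < r) (c : Fin s → ℝ)
    (KN B : Matrix (Fin s) (Fin s) ℝ) (Q : Matrix (Fin q) (Fin r) ℝ)
    (hQ : Q = (Vand c q)ᵀ * B * Vand c r * (Pascal r)⁻¹)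
    (heq : (Etilde q)ᵀ * ((Vand c q)ᵀ * KN * Vand c r) +
        ((Vand c q)ᵀ * KN * Vand c r) * Etilde r =
      Matrix.of (fun (_ : Fin q) (_ : Fin r) => (1 : ℝ)) - Q) :
    Q ⟨0, hq⟩ ⟨0, hr⟩ = 1 ∧ ∑ i, ∑ j, B i j = 1 := by
  have hQ00 : Q ⟨0, hq⟩ ⟨0, hr⟩ = 1 := by
    have h00 := congrFun (congrFun heq ⟨0, hq⟩) ⟨0, hr⟩
    rw [Matrix.add_apply, transpose_Etilde_mul_apply_zero_left, mul_Etilde_apply_zero_right,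
      Matrix.sub_apply, Matrix.of_apply] at h00
    linarith
  refine ⟨hQ00, ?_⟩
  rwa [hQ, mul_Pascal_inv_apply_zero_right, transpose_Vand_mul_mul_Vand_apply_zero] at hQ00
end

section
/- Let K_n ∈ ℝ^{s×s} satisfy the one-leg conditions (c^{l−1})^T K_n = 𝟙^T K_n C^{l−1} for l = 1,…,q. Then for 1 ≤ l ≤ q and 1 ≤ k ≤ r, the (l,k) entry of Ẽ_q^T V_q^T K_n V_r + V_q^T K_n V_r Ẽ_r equals (𝟙^T K_n)·(l+k−2)·c^{l+k−3} (interpreted as 0 when l = k = 1). -/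
/-!
Under the one-leg conditions `V_qᵀ K_n V_r` is a Hankel matrix: its `(a, b)` entry is
`g (a + b)` with `g p = ∑ⱼ (𝟙ᵀ K_n)ⱼ c_j ^ p`. Multiplying by `Ẽ` from either side acts on the
exponent like differentiation of `c ^ (a + b)`, so the two products add up by the product rule.
-/

open Matrix BigOperators

theorem sum_Etilde_mul {n : ℕ} (i : Fin n) (f : ℕ → ℝ) :
    ∑ m : Fin n, Etilde n m i * f m = i * f (i - 1) := by
  obtain ⟨_ | i, hi⟩ := i
  · simp [Etilde]
  · rw [Finset.sum_eq_single ⟨i, by omega⟩]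
    · simp [Etilde]
    · intro m _ hm
      have : (m : ℕ) ≠ i := fun h => hm (Fin.ext h)
      simp [Etilde, Ne.symm this]
    · simp

theorem Etilde_transpose_mul_of_apply {n : ℕ} {o : Type*} (f : ℕ → o → ℝ) (i : Fin n) (j : o) :
    ((Etilde n)ᵀ * of fun (a : Fin n) j => f a j) i j = i * f (i - 1) j := by
  simpa [mul_apply] using sum_Etilde_mul i (f · j)

theorem of_mul_Etilde_apply {n : ℕ} {o : Type*} (f : o → ℕ → ℝ) (i : o) (j : Fin n) :
    ((of fun i (b : Fin n) => f i b) * Etilde n) i j = j * f i (j - 1) := by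
  simpa [mul_apply, mul_comm] using sum_Etilde_mul j (f i)

theorem vand_transpose_mul_mul_vand {s q r : ℕ} (c : Fin s → ℝ) (K : Matrix (Fin s) (Fin s) ℝ)
    (hK : ∀ l : ℕ, l < q → ∀ j : Fin s, ∑ i, c i ^ l * K i j = (∑ i, K i j) * c j ^ l) :
    (Vand c q)ᵀ * K * Vand c r =
      of fun (a : Fin q) (b : Fin r) => ∑ j, (∑ i, K i j) * c j ^ ((a : ℕ) + (b : ℕ)) := by
  ext a b
  simp only [mul_apply, Vand, transpose_apply, of_apply, hK a a.isLt, pow_add, mul_assoc]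

theorem natCast_mul_pred_add_natCast_mul_pred (g : ℕ → ℝ) (a b : ℕ) :
    (a : ℝ) * g (a - 1 + b) + b * g (a + (b - 1)) = ((a + b : ℕ) : ℝ) * g (a + b - 1) := by
  rcases Nat.eq_zero_or_pos a with rfl | ha
  · simp
  rcases Nat.eq_zero_or_pos b with rfl | hb
  · simp
  rw [show a - 1 + b = a + b - 1 by omega, show a + (b - 1) = a + b - 1 by omega]
  push_cast; ring

/-- Under the one-leg conditions, the `(l,k)` entry of
`Ẽ_qᵀ V_qᵀ K_n V_r + V_qᵀ K_n V_r Ẽ_r` equals `(𝟙ᵀ K_n)(l+k−2) c^{l+k−3}`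
(1-based; the factor `l+k−2` makes the entry `0` for `l = k = 1`). -/
theorem stmt16 (s q r : ℕ) (c : Fin s → ℝ) (Kn : Matrix (Fin s) (Fin s) ℝ)
    (holeg : ∀ l : ℕ, l < q → ∀ j : Fin s,
      ∑ i, c i ^ l * Kn i j = (∑ i, Kn i j) * c j ^ l) :
    ∀ (l : Fin q) (k : Fin r),
      ((Etilde q)ᵀ * ((Vand c q)ᵀ * Kn * Vand c r) +
          ((Vand c q)ᵀ * Kn * Vand c r) * Etilde r) l k =
        (((l : ℕ) + (k : ℕ) : ℕ) : ℝ) *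
          ∑ j, (∑ i, Kn i j) * c j ^ ((l : ℕ) + (k : ℕ) - 1) := by
  intro l k
  rw [vand_transpose_mul_mul_vand c Kn holeg, Matrix.add_apply,
    Etilde_transpose_mul_of_apply (fun a (b : Fin r) => ∑ j, (∑ i, Kn i j) * c j ^ (a + (b : ℕ))),
    of_mul_Etilde_apply (fun (a : Fin q) b => ∑ j, (∑ i, Kn i j) * c j ^ ((a : ℕ) + b))]
  exact natCast_mul_pred_add_natCast_mul_pred (fun p => ∑ j, (∑ i, Kn i j) * c j ^ p) l k
end
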